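/- arXiv:2602.00544 — 3 statements merged into one kernel-verified Lean document; each statement's English description precedes it below -/
import Mathlib

section
/- Let L be a closed linear subspace of a real Hilbert space X, let λ ∈ (0,2), and let ε ∈ [0,1]. For any nonzero x ∈ X, one has ‖x - P_L x‖ ≥ ε‖x‖ if and only if ‖R_{L,λ}x‖ ≤ √(1 - λ(2-λ)ε²)·‖x‖. -/
theorem stmt_2 {X : Type*} [NormedAddCommGroup X] [InnerProductSpace ℝ X]
    (L : Submodule ℝ X) [CompleteSpace L] (lam : ℝ) (hlam : lam ∈ Set.Ioo (0:ℝ) 2)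
    (eps : ℝ) (heps : eps ∈ Set.Icc (0:ℝ) 1)
    (R : X → X) (hR : ∀ x, R x = (1 - lam) • x + lam • (Submodule.orthogonalProjectionOnto L x : X)) :
    ∀ x : X, x ≠ 0 →
      (‖x - (Submodule.orthogonalProjectionOnto L x : X)‖ ≥ eps * ‖x‖ ↔
        ‖R x‖ ≤ Real.sqrt (1 - lam * (2 - lam) * eps ^ 2) * ‖x‖) := by
  obtain ⟨hl0, hl2⟩ := hlam
  obtain ⟨he0, he1⟩ := heps
  intro x hx
  set p : X := (Submodule.orthogonalProjectionOnto L x : X) with hp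
  set q : X := x - p with hq
  have hxeq : x = p + q := by simp [hq]
  have hinner : @inner ℝ X _ p q = 0 := by
    have h2 := Submodule.sub_starProjection_mem_orthogonal (K := L) x p
      (Submodule.orthogonalProjectionOnto L x).2
    exact h2
  have hnormx : ‖x‖ ^ 2 = ‖p‖ ^ 2 + ‖q‖ ^ 2 := by
    rw [hxeq, @norm_add_sq_real, hinner]; ring
  have hRx : R x = p + (1 - lam) • q := by
    rw [hR x, ← hp, show x = p + q from hxeq]
    module
  have hnormR : ‖R x‖ ^ 2 = ‖p‖ ^ 2 + (1 - lam) ^ 2 * ‖q‖ ^ 2 := by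
    rw [hRx, @norm_add_sq_real, real_inner_smul_right, hinner, norm_smul]
    simp [mul_pow, sq_abs]
  have hlc : 0 < lam * (2 - lam) := by nlinarith
  have hc : 0 ≤ 1 - lam * (2 - lam) * eps ^ 2 := by nlinarith
  have hxpos : (0:ℝ) < ‖x‖ := norm_pos_iff.mpr hx
  have hsq : Real.sqrt (1 - lam * (2 - lam) * eps ^ 2) * ‖x‖
      = Real.sqrt ((1 - lam * (2 - lam) * eps ^ 2) * ‖x‖ ^ 2) := by
    rw [Real.sqrt_mul hc, Real.sqrt_sq (le_of_lt hxpos)]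
  rw [hsq]
  constructor
  · intro h
    rw [← Real.sqrt_sq (norm_nonneg (R x))]
    apply Real.sqrt_le_sqrt
    have hq2 : eps ^ 2 * ‖x‖ ^ 2 ≤ ‖q‖ ^ 2 := by
      have := mul_le_mul h h (by positivity) (norm_nonneg _)
      nlinarith
    nlinarith [mul_le_mul_of_nonneg_left hq2 hlc.le]
  · intro h
    have h2 : ‖R x‖ ^ 2 ≤ (1 - lam * (2 - lam) * eps ^ 2) * ‖x‖ ^ 2 := by
      have := Real.sq_sqrt (by positivity : (0:ℝ) ≤ (1 - lam * (2 - lam) * eps ^ 2) * ‖x‖ ^ 2)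
      nlinarith [Real.sqrt_nonneg ((1 - lam * (2 - lam) * eps ^ 2) * ‖x‖ ^ 2), norm_nonneg (R x)]
    have hq2 : eps ^ 2 * ‖x‖ ^ 2 ≤ ‖q‖ ^ 2 := by
      nlinarith [mul_pos hlc hxpos, mul_le_mul_of_nonneg_left h2 hlc.le, sq_nonneg (eps*‖x‖)]
    show eps * ‖x‖ ≤ ‖q‖
    nlinarith [norm_nonneg q, mul_nonneg he0 (le_of_lt hxpos)]
end

section
/- Let L₁ ⊆ L₂ be closed linear subspaces of a real Hilbert space X and let λ ∈ (0,2). Then for every nonzero x ∈ X with R_{L₂,λ}x ≠ 0, one has ‖P_{L₁}(R_{L₂,λ}x)‖/‖R_{L₂,λ}x‖ ≥ ‖P_{L₁}x‖/‖x‖; i.e., the cosine of the angle between a vector and its projection onto L₁ does not decrease after applying a relaxed projection onto the larger subspace L₂. -/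
open RealInnerProductSpace


theorem stmt_4 {X : Type*} [NormedAddCommGroup X] [InnerProductSpace ℝ X]
    (L₁ L₂ : Submodule ℝ X) [CompleteSpace L₁] [CompleteSpace L₂]
    (h : L₁ ≤ L₂) (lam : ℝ) (hlam : lam ∈ Set.Ioo (0:ℝ) 2)
    (R₂ : X → X)
    (hR₂ : ∀ x, R₂ x = (1 - lam) • x + lam • (L₂.orthogonalProjection x : X)) :
    ∀ x : X, x ≠ 0 → R₂ x ≠ 0 →
      ‖(L₁.orthogonalProjection (R₂ x) : X)‖ / ‖R₂ x‖ ≥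
        ‖(L₁.orthogonalProjection x : X)‖ / ‖x‖ := by
  obtain ⟨hl0, hl2⟩ := hlam
  intro x hx hRx
  set p : X := (L₂.orthogonalProjection x : X) with hp_def
  set q : X := x - p with hq_def
  have hq : q ∈ L₂ᗮ := by have := L₂.sub_starProjection_mem_orthogonal x; rwa [Submodule.starProjection_apply] at this
  have hq1 : q ∈ L₁ᗮ := Submodule.orthogonal_le h hq
  have hxpq : x = p + q := by simp [hq_def]
  have hRform : R₂ x = p + (1 - lam) • q := by
    rw [hR₂, hq_def]
    module
  have hz : (L₁.orthogonalProjection q : X) = 0 := by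
    rw [show L₁.orthogonalProjection q = 0 from Submodule.orthogonalProjectionOnto_apply_of_mem_orthogonal hq1]
    simp
  have hnum : (L₁.orthogonalProjection (R₂ x) : X) = (L₁.orthogonalProjection x : X) := by
    rw [hRform]
    conv_rhs => rw [hxpq]
    push_cast [map_add, map_smul, hz]
    simp [hz]
  have hpmem : p ∈ L₂ := (L₂.orthogonalProjection x).2
  have hinner : ⟪p, q⟫ = 0 := (Submodule.mem_orthogonal L₂ q).mp hq p hpmem
  have hinner' : ⟪q, p⟫ = 0 := by rw [real_inner_comm]; exact hinner
  have hn1 : ‖x‖ ^ 2 = ‖p‖ ^ 2 + ‖q‖ ^ 2 := by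
    rw [hxpq, ← real_inner_self_eq_norm_sq, ← real_inner_self_eq_norm_sq,
      ← real_inner_self_eq_norm_sq, inner_add_add_self, hinner]
    simp only [real_inner_smul_left, real_inner_smul_right, hinner, hinner']
    ring
  have hinner2 : ⟪p, (1 - lam) • q⟫ = 0 := by
    rw [real_inner_smul_right, hinner]; ring
  have hn2 : ‖R₂ x‖ ^ 2 = ‖p‖ ^ 2 + (1 - lam) ^ 2 * ‖q‖ ^ 2 := by
    rw [hRform, ← real_inner_self_eq_norm_sq, ← real_inner_self_eq_norm_sq,
      ← real_inner_self_eq_norm_sq, inner_add_add_self, hinner2,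
      real_inner_smul_left, real_inner_smul_right, real_inner_self_eq_norm_sq]
    simp only [real_inner_smul_left, real_inner_smul_right, hinner, hinner']
    ring
  have hle : ‖R₂ x‖ ≤ ‖x‖ := by
    have h2 : ‖R₂ x‖ ^ 2 ≤ ‖x‖ ^ 2 := by
      rw [hn1, hn2]
      nlinarith [sq_nonneg ‖q‖, mul_nonneg (mul_pos hl0 (by linarith : (0:ℝ) < 2 - lam)).le (sq_nonneg ‖q‖)]
    nlinarith [norm_nonneg (R₂ x), norm_nonneg x]
  have hRpos : 0 < ‖R₂ x‖ := norm_pos_iff.mpr hRx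
  rw [hnum]
  exact div_le_div_of_nonneg_left (norm_nonneg _) hRpos hle
end

section
/- Let L₁ ⊆ L₂ be closed linear subspaces of a real Hilbert space X and let λ ∈ (0,2). Then for every nonzero x ∈ X with R_{L₂,λ}x ≠ 0, sin_{L₁}(R_{L₂,λ}x) ≤ sin_{L₁}(x), where sin_{L}(y) := ‖y - P_L y‖/‖y‖ for y ≠ 0. -/
open RealInnerProductSpace

private lemma stmt_5_aux {A B C t : ℝ} (hB : 0 ≤ B) (ht0 : 0 ≤ t) (ht1 : t ≤ 1)
    (hAC : A ≤ C) : (A + t * B) * (C + B) ≤ (A + B) * (C + t * B) := by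
  nlinarith [mul_nonneg (mul_nonneg (by linarith : (0:ℝ) ≤ 1 - t) (by linarith : (0:ℝ) ≤ C - A)) hB]


theorem stmt_5 {X : Type*} [NormedAddCommGroup X] [InnerProductSpace ℝ X]
    (L₁ L₂ : Submodule ℝ X) [CompleteSpace L₁] [CompleteSpace L₂]
    (h : L₁ ≤ L₂) (lam : ℝ) (hlam : lam ∈ Set.Ioo (0:ℝ) 2)
    (R₂ : X → X)
    (hR₂ : ∀ x, R₂ x = (1 - lam) • x + lam • (L₂.orthogonalProjection x : X)) :
    ∀ x : X, x ≠ 0 → R₂ x ≠ 0 →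
      ‖R₂ x - (L₁.orthogonalProjection (R₂ x) : X)‖ / ‖R₂ x‖ ≤
        ‖x - (L₁.orthogonalProjection x : X)‖ / ‖x‖ := by
  intro x hx hRx
  set p : X := (L₂.orthogonalProjection x : X) with hp
  set q : X := x - p with hqdef
  have hqmem : q ∈ L₂ᗮ := Submodule.sub_starProjection_mem_orthogonal (K := L₂) x
  have hq1 : q ∈ L₁ᗮ := Submodule.orthogonal_le h hqmem
  have hP1q : L₁.orthogonalProjection q = 0 :=
    Submodule.orthogonalProjectionOnto_apply_of_mem_orthogonal hq1
  have hxpq : x = p + q := by simp [hqdef]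
  have hR : R₂ x = p + (1 - lam) • q := by
    rw [hR₂, ← hp]
    nth_rewrite 1 [hxpq]
    module
  set P₁p : X := (L₁.orthogonalProjection p : X) with hP₁p
  have hPR : (L₁.orthogonalProjection (R₂ x) : X) = P₁p := by
    rw [hR, map_add, map_smul, hP1q]
    simp [hP₁p]
  have hPx : (L₁.orthogonalProjection x : X) = P₁p := by
    rw [hxpq, map_add, hP1q]
    simp [hP₁p]
  set w : X := p - P₁p with hw
  have hwL2 : w ∈ L₂ := by
    apply Submodule.sub_mem _ (L₂.orthogonalProjection x).2
    exact h (L₁.orthogonalProjection p).2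
  have hwq : (inner ℝ w q : ℝ) = 0 := (Submodule.mem_orthogonal L₂ q).1 hqmem w hwL2
  have hpq : (inner ℝ p q : ℝ) = 0 :=
    (Submodule.mem_orthogonal L₂ q).1 hqmem p (L₂.orthogonalProjection x).2
  have hwP : (inner ℝ w P₁p : ℝ) = 0 := by
    have hwmem : w ∈ L₁ᗮ := Submodule.sub_starProjection_mem_orthogonal (K := L₁) p
    exact (Submodule.mem_orthogonal' L₁ w).1 hwmem P₁p (L₁.orthogonalProjection p).2
  have hsq : ∀ (u v : X) (c : ℝ), (inner ℝ u v : ℝ) = 0 →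
      ‖u + c • v‖ ^ 2 = ‖u‖ ^ 2 + c ^ 2 * ‖v‖ ^ 2 := by
    intro u v c huv
    rw [norm_add_sq_real, real_inner_smul_right, huv, norm_smul]
    simp [mul_pow, sq_abs]
  have e1 : ‖R₂ x - (L₁.orthogonalProjection (R₂ x) : X)‖ ^ 2
      = ‖w‖ ^ 2 + (1 - lam) ^ 2 * ‖q‖ ^ 2 := by
    have : R₂ x - (L₁.orthogonalProjection (R₂ x) : X) = w + (1 - lam) • q := by
      rw [hPR, hR, hw]; module
    rw [this, hsq w q (1 - lam) hwq]
  have e2 : ‖R₂ x‖ ^ 2 = ‖p‖ ^ 2 + (1 - lam) ^ 2 * ‖q‖ ^ 2 := by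
    rw [hR, hsq p q (1 - lam) hpq]
  have e3 : ‖x - (L₁.orthogonalProjection x : X)‖ ^ 2 = ‖w‖ ^ 2 + ‖q‖ ^ 2 := by
    have : x - (L₁.orthogonalProjection x : X) = w + (1 : ℝ) • q := by
      rw [hPx, hw]; nth_rewrite 1 [hxpq]; module
    rw [this, hsq w q 1 hwq]; ring
  have e4 : ‖x‖ ^ 2 = ‖p‖ ^ 2 + ‖q‖ ^ 2 := by
    have : x = p + (1 : ℝ) • q := by nth_rewrite 1 [hxpq]; module
    rw [this, hsq p q 1 hpq]; ring
  have hwp : ‖w‖ ^ 2 ≤ ‖p‖ ^ 2 := by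
    have : ‖p‖ ^ 2 = ‖w‖ ^ 2 + ‖P₁p‖ ^ 2 := by
      have hpwP : p = w + (1 : ℝ) • P₁p := by rw [hw]; module
      nth_rewrite 1 [hpwP]
      rw [hsq w P₁p 1 hwP]; ring
    nlinarith [sq_nonneg ‖P₁p‖]
  have ht : 0 ≤ 1 - (1 - lam) ^ 2 := by
    obtain ⟨h0, h2⟩ := hlam
    nlinarith
  have hB : 0 < ‖R₂ x‖ := norm_pos_iff.2 hRx
  have hD : 0 < ‖x‖ := norm_pos_iff.2 hx
  rw [div_le_div_iff₀ hB hD]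
  have key : (‖R₂ x - (L₁.orthogonalProjection (R₂ x) : X)‖ * ‖x‖) ^ 2
      ≤ (‖x - (L₁.orthogonalProjection x : X)‖ * ‖R₂ x‖) ^ 2 := by
    have expand1 : (‖R₂ x - (L₁.orthogonalProjection (R₂ x) : X)‖ * ‖x‖) ^ 2
        = ‖R₂ x - (L₁.orthogonalProjection (R₂ x) : X)‖ ^ 2 * ‖x‖ ^ 2 := by ring
    have expand2 : (‖x - (L₁.orthogonalProjection x : X)‖ * ‖R₂ x‖) ^ 2
        = ‖x - (L₁.orthogonalProjection x : X)‖ ^ 2 * ‖R₂ x‖ ^ 2 := by ring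
    rw [expand1, expand2, e1, e2, e3, e4]
    have := stmt_5_aux (A := ‖w‖ ^ 2) (B := ‖q‖ ^ 2) (C := ‖p‖ ^ 2) (t := (1 - lam) ^ 2)
      (sq_nonneg _) (sq_nonneg _) (by linarith) hwp
    linarith
  have h1 : 0 ≤ ‖R₂ x - (L₁.orthogonalProjection (R₂ x) : X)‖ * ‖x‖ := by positivity
  have h2 : 0 ≤ ‖x - (L₁.orthogonalProjection x : X)‖ * ‖R₂ x‖ := by positivity
  exact (pow_le_pow_iff_left₀ h1 h2 two_ne_zero).mp key
end
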